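/- For every fixed positive integer m, the densities of the generalized Simons cones converge to the entropy of the round m-sphere: lim_{l→∞} D(m,l) = E(m), where D(m,l) = (σ_m·σ_l/σ_{m+l})·(m/(m+l))^{m/2}·(l/(m+l))^{l/2} and E(m) = 2√π·(m/(2e))^{m/2}/Γ((m+1)/2). -/

import Mathlib

/-!
Since `σ_n = 2 π^{(n+1)/2} / Γ((n+1)/2)`, with `x = (l+1)/2` the density factors as
`D(m,l) = 2√π / Γ((m+1)/2) · Γ(x + m/2) / Γ(x) · (m/(m+l))^{m/2} · (l/(m+l))^{l/2}`.
Comparing secant slopes of the convex function `log ∘ Γ` with its unit steps `log y` squeezes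
`Γ(x+a)/Γ(x)` between `(x-1)^a` and `(x+a)^a`, so `Γ(x + m/2)/Γ(x) ~ x^{m/2}`. Then
`(x · m/(m+l))^{m/2} → (m/2)^{m/2}` and `(l/(m+l))^{l/2} → e^{-m/2}`, and the product of
the limits is Stone's `E(m)`.
-/

/-- `σ_n`, the area of the unit sphere `S^n ⊆ ℝ^{n+1}`. -/
noncomputable def sphereArea (n : ℕ) : ℝ :=
  ((n : ℝ) + 1) * Real.pi ^ (((n : ℝ) + 1) / 2) / Real.Gamma (((n : ℝ) + 3) / 2)

/-- `D(m,l)`, the density at the vertex of the generalized Simons cone `C_{m,l}`. -/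
noncomputable def simonsDensity (m l : ℕ) : ℝ :=
  (sphereArea m * sphereArea l / sphereArea (m + l)) *
    ((m : ℝ) / ((m : ℝ) + (l : ℝ))) ^ ((m : ℝ) / 2) *
    ((l : ℝ) / ((m : ℝ) + (l : ℝ))) ^ ((l : ℝ) / 2)

/-- Stone's formula for the entropy of the round `n`-sphere (with `0 ^ 0 = 1`). -/
noncomputable def sphereEntropy (n : ℕ) : ℝ :=
  2 * Real.sqrt Real.pi * ((n : ℝ) / (2 * Real.exp 1)) ^ ((n : ℝ) / 2) /
    Real.Gamma (((n : ℝ) + 1) / 2)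

open Real Filter Topology

namespace Real

theorem tendsto_add_div_self_rpow (c a : ℝ) :
    Tendsto (fun x : ℝ => ((x + c) / x) ^ a) atTop (𝓝 1) := by
  have hbase : Tendsto (fun x : ℝ => (x + c) / x) atTop (𝓝 1) := by
    have h : Tendsto (fun x : ℝ => 1 + c * x⁻¹) atTop (𝓝 (1 + c * 0)) :=
      tendsto_const_nhds.add (tendsto_inv_atTop_zero.const_mul c)
    rw [mul_zero, add_zero] at h
    refine h.congr' ?_
    filter_upwards [eventually_ne_atTop 0] with x hx
    field_simp
  simpa using hbase.rpow_const (Or.inl one_ne_zero)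

theorem tendsto_div_add_rpow_self (c : ℝ) :
    Tendsto (fun x : ℝ => (x / (x + c)) ^ x) atTop (𝓝 (exp (-c))) := by
  rw [exp_neg]
  refine ((tendsto_one_add_div_rpow_exp c).inv₀ (exp_ne_zero c)).congr' ?_
  filter_upwards [eventually_gt_atTop |c|] with x hx
  have hx0 : 0 < x := (abs_nonneg c).trans_lt hx
  have hxc : 0 < x + c := by linarith [neg_abs_le c]
  rw [one_add_div hx0.ne', ← inv_rpow (div_pos hxc hx0).le, inv_div]

theorem sub_one_rpow_le_Gamma_add_div_Gamma {x a : ℝ} (hx : 1 < x) (ha : 0 ≤ a) :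
    (x - 1) ^ a ≤ Gamma (x + a) / Gamma x := by
  have hx1 : 0 < x - 1 := sub_pos.2 hx
  have hΓx := Gamma_pos_of_pos (hx1.trans (sub_one_lt x))
  rcases ha.eq_or_lt with rfl | ha
  · simp [hΓx.ne']
  have hΓxa := Gamma_pos_of_pos (show 0 < x + a by linarith)
  have hslope := convexOn_log_Gamma.slope_mono_adjacent (x := x - 1) (y := x) (z := x + a)
    hx1 (show 0 < x + a by linarith) (sub_one_lt x) (by linarith)
  have hrec : log (Gamma x) - log (Gamma (x - 1)) = log (x - 1) := by
    have h := Gamma_add_one hx1.ne'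
    rw [sub_add_cancel] at h
    rw [h, log_mul hx1.ne' (Gamma_pos_of_pos hx1).ne', add_sub_cancel_right]
  simp only [Function.comp_apply, hrec, sub_sub_cancel, div_one, add_sub_cancel_left] at hslope
  rw [rpow_def_of_pos hx1, ← exp_log (div_pos hΓxa hΓx), exp_le_exp, log_div hΓxa.ne' hΓx.ne']
  rwa [le_div_iff₀ ha] at hslope

theorem Gamma_add_div_Gamma_le_add_rpow {x a : ℝ} (hx : 0 < x) (ha : 0 ≤ a) :
    Gamma (x + a) / Gamma x ≤ (x + a) ^ a := by
  have hΓx := Gamma_pos_of_pos hx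
  rcases ha.eq_or_lt with rfl | ha
  · simp [hΓx.ne']
  have hxa : 0 < x + a := by linarith
  have hΓxa := Gamma_pos_of_pos hxa
  have hslope := convexOn_log_Gamma.slope_mono_adjacent (x := x) (y := x + a) (z := x + a + 1)
    hx (show 0 < x + a + 1 by linarith) (by linarith) (by linarith)
  simp only [Function.comp_apply, Gamma_add_one hxa.ne', log_mul hxa.ne' hΓxa.ne',
    add_sub_cancel_left, add_sub_cancel_right, div_one] at hslope
  rw [rpow_def_of_pos hxa, ← exp_log (div_pos hΓxa hΓx), exp_le_exp, log_div hΓxa.ne' hΓx.ne']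
  rwa [div_le_iff₀ ha] at hslope

theorem tendsto_Gamma_add_div_Gamma_div_rpow {a : ℝ} (ha : 0 ≤ a) :
    Tendsto (fun x : ℝ => Gamma (x + a) / Gamma x / x ^ a) atTop (𝓝 1) := by
  refine tendsto_of_tendsto_of_tendsto_of_le_of_le' (tendsto_add_div_self_rpow (-1) a)
    (tendsto_add_div_self_rpow a a) ?_ ?_
  all_goals filter_upwards [eventually_gt_atTop 1] with x hx
  · rw [div_rpow (by linarith) (by linarith), ← sub_eq_add_neg]
    gcongr
    exact sub_one_rpow_le_Gamma_add_div_Gamma hx ha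
  · rw [div_rpow (by linarith) (by linarith)]
    gcongr
    exact Gamma_add_div_Gamma_le_add_rpow (by linarith) ha

end Real

theorem sphereArea_eq (n : ℕ) :
    sphereArea n = 2 * π ^ (((n : ℝ) + 1) / 2) / Gamma (((n : ℝ) + 1) / 2) := by
  have hn : 0 < ((n : ℝ) + 1) / 2 := by positivity
  rw [sphereArea, show ((n : ℝ) + 3) / 2 = ((n : ℝ) + 1) / 2 + 1 by ring, Gamma_add_one hn.ne']
  field_simp [(Gamma_pos_of_pos hn).ne']

theorem sphereArea_mul_sphereArea_div (m l : ℕ) :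
    sphereArea m * sphereArea l / sphereArea (m + l) =
      2 * √π / Gamma (((m : ℝ) + 1) / 2) *
        (Gamma (((l : ℝ) + 1) / 2 + (m : ℝ) / 2) / Gamma (((l : ℝ) + 1) / 2)) := by
  have hπ : π ^ (((l : ℝ) + 1) / 2 + (m : ℝ) / 2) =
      π ^ (((m : ℝ) + 1) / 2) * π ^ (((l : ℝ) + 1) / 2) / √π := by
    rw [sqrt_eq_rpow, ← rpow_add pi_pos, ← rpow_sub pi_pos]
    ring_nf
  have hΓ : (((m + l : ℕ) : ℝ) + 1) / 2 = ((l : ℝ) + 1) / 2 + (m : ℝ) / 2 := by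
    push_cast
    ring
  rw [sphereArea_eq, sphereArea_eq, sphereArea_eq, hΓ, hπ]
  field_simp

theorem simonsDensity_eq (m l : ℕ) :
    simonsDensity m l =
      2 * √π / Gamma (((m : ℝ) + 1) / 2) *
        (Gamma (((l : ℝ) + 1) / 2 + (m : ℝ) / 2) / Gamma (((l : ℝ) + 1) / 2) /
          (((l : ℝ) + 1) / 2) ^ ((m : ℝ) / 2)) *
        ((((l : ℝ) + 1) / 2) * ((m : ℝ) / ((m : ℝ) + (l : ℝ)))) ^ ((m : ℝ) / 2) *
        ((l : ℝ) / ((m : ℝ) + (l : ℝ))) ^ ((l : ℝ) / 2) := by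
  have hx : 0 < ((l : ℝ) + 1) / 2 := by positivity
  rw [simonsDensity, sphereArea_mul_sphereArea_div, mul_rpow hx.le (by positivity)]
  field_simp [(rpow_pos_of_pos hx ((m : ℝ) / 2)).ne']

theorem sphereEntropy_eq (n : ℕ) :
    sphereEntropy n = 2 * √π / Gamma (((n : ℝ) + 1) / 2) * ((n : ℝ) / 2) ^ ((n : ℝ) / 2) *
      exp (-((n : ℝ) / 2)) := by
  rw [sphereEntropy, div_mul_eq_div_div, div_eq_mul_inv ((n : ℝ) / 2),
    mul_rpow (by positivity) (by positivity), inv_rpow (exp_pos 1).le, exp_one_rpow, ← exp_neg]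
  ring

theorem simonsDensity_tendsto_sphereEntropy_general (m : ℕ) :
    Filter.Tendsto (fun l : ℕ => simonsDensity m l) Filter.atTop (nhds (sphereEntropy m)) := by
  have hGamma : Tendsto (fun l : ℕ => Gamma (((l : ℝ) + 1) / 2 + (m : ℝ) / 2) /
      Gamma (((l : ℝ) + 1) / 2) / (((l : ℝ) + 1) / 2) ^ ((m : ℝ) / 2)) atTop (𝓝 1) :=
    (tendsto_Gamma_add_div_Gamma_div_rpow (by positivity)).comp <|
      (tendsto_atTop_add_const_right _ 1 tendsto_natCast_atTop_atTop).atTop_div_const two_pos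
  have hbase : Tendsto (fun l : ℕ =>
      ((((l : ℝ) + 1) / 2) * ((m : ℝ) / ((m : ℝ) + (l : ℝ)))) ^ ((m : ℝ) / 2)) atTop
      (𝓝 (((m : ℝ) / 2) ^ ((m : ℝ) / 2))) := by
    refine .rpow_const ?_ (Or.inr (by positivity))
    refine (tendsto_add_mul_div_add_mul_atTop_nhds (m : ℝ) (2 * m) m two_ne_zero).congr
      fun l => ?_
    field_simp
    ring
  have hexp : Tendsto (fun l : ℕ => ((l : ℝ) / ((m : ℝ) + (l : ℝ))) ^ ((l : ℝ) / 2)) atTop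
      (𝓝 (exp (-((m : ℝ) / 2)))) := by
    refine ((tendsto_div_add_rpow_self _).comp
      (tendsto_natCast_atTop_atTop.atTop_div_const two_pos)).congr fun l => ?_
    simp only [Function.comp_apply]
    congr 1
    field_simp
    ring
  simp_rw [simonsDensity_eq, sphereEntropy_eq]
  simpa using ((hGamma.const_mul _).mul hbase).mul hexp

theorem simonsDensity_tendsto_sphereEntropy (m : ℕ) (hm : 1 ≤ m) :
    Filter.Tendsto (fun l : ℕ => simonsDensity m l) Filter.atTop (nhds (sphereEntropy m)) :=
  simonsDensity_tendsto_sphereEntropy_general m
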